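/- Suppose g ≥ 1 and f_1, …, f_g ∈ Homeo_Z^+(R) are each commutators, i.e., f_i = [~a_i, ~b_i] for some ~a_i, ~b_i ∈ Homeo_Z^+(R). If rot(f_1 ∘ ⋯ ∘ f_g) ≤ -g, then rot(f_i) = -1 for some i. -/

import Mathlib

/-!
Write `c = b⁻¹ a⁻¹ b a`, so that `b a = (a b) c`. If `τ c < -1` then `c x < x - 1` for all `x`,
hence `(b a) x ≤ (a b) x - 1` and `τ (b a) ≤ τ (a b) - 1`; but `b a` and `a b` are conjugate,
so `τ c ≥ -1` (Milnor–Wood for a single commutator).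

If moreover no `τ fᵢ` equals `-1`, then `τ fᵢ > -1`, so every `fᵢ` moves each point by more
than `-1`. Composing, `f₁ ⋯ f_g` moves each point by more than `-g`, and for a continuous lift
this strict pointwise bound passes to the translation number: `τ (f₁ ⋯ f_g) > -g`.
-/

open CircleDeg1Lift

local notation "τ" => translationNumber

namespace CircleDeg1Lift

theorem commute_translate_int (f : CircleDeg1Lift) (m : ℤ) :
    Commute f (translate (Multiplicative.ofAdd (m : ℝ))) :=
  ext fun x => by simp [mul_apply, add_comm]

theorem translationNumber_mul_le_of_translationNumber_lt_int {f g : CircleDeg1Lift} {m : ℤ}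
    (hg : τ g < m) : τ (f * g) ≤ τ f + m := by
  have hle : f * g ≤ f * translate (Multiplicative.ofAdd (m : ℝ)) := fun x => by
    simpa [mul_apply, add_comm] using f.monotone (map_lt_of_translationNumber_lt_int g hg x).le
  calc τ (f * g) ≤ τ (f * translate (Multiplicative.ofAdd (m : ℝ))) := translationNumber_mono hle
    _ = τ f + m := by
      rw [translationNumber_mul_of_commute (commute_translate_int f m),
        translationNumber_translate]

theorem neg_one_le_translationNumber_commutator (a b : CircleDeg1Liftˣ) :
    -1 ≤ τ ↑(b⁻¹ * a⁻¹ * b * a) := by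
  by_contra! hlt
  have hba : b * a = (a * b) * (b⁻¹ * a⁻¹ * b * a) := by group
  have hconj : τ ↑(b * a) = τ ↑(a * b) := by
    rw [show b * a = a⁻¹ * (a * b) * a by group]
    exact translationNumber_conj_eq' a _
  have hle := translationNumber_mul_le_of_translationNumber_lt_int (f := ↑(a * b)) (m := -1)
    (by exact_mod_cast hlt)
  rw [← Units.val_mul, ← hba, hconj] at hle
  push_cast at hle
  linarith

theorem continuous_units (f : CircleDeg1Liftˣ) : Continuous (f : CircleDeg1Lift) := by
  simpa using (toOrderIso f).continuous

theorem add_length_mul_le_list_prod_apply (l : List CircleDeg1Lift) {c : ℝ}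
    (hl : ∀ f ∈ l, ∀ x, x + c ≤ f x) (x : ℝ) : x + l.length * c ≤ l.prod x := by
  induction l with
  | nil => simp
  | cons f l ih =>
    have hf := hl f List.mem_cons_self (l.prod x)
    have hl' := ih (fun g hg => hl g (List.mem_cons_of_mem _ hg))
    simp only [List.prod_cons, mul_apply, List.length_cons, Nat.cast_succ]
    linarith

theorem add_length_mul_lt_list_prod_apply (l : List CircleDeg1Lift) (hne : l ≠ []) {c : ℝ}
    (hl : ∀ f ∈ l, ∀ x, x + c < f x) (x : ℝ) : x + l.length * c < l.prod x := by
  obtain ⟨f, l, rfl⟩ := List.exists_cons_of_ne_nil hne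
  have hf := hl f List.mem_cons_self (l.prod x)
  have hl' := add_length_mul_le_list_prod_apply l
    (fun g hg x => (hl g (List.mem_cons_of_mem _ hg) x).le) x
  simp only [List.prod_cons, mul_apply, List.length_cons, Nat.cast_succ]
  linarith

theorem length_mul_lt_translationNumber_list_prod (l : List CircleDeg1Liftˣ) (hne : l ≠ [])
    {m : ℤ} (hl : ∀ f ∈ l, (m : ℝ) < τ f) : l.length * (m : ℝ) < τ ↑l.prod := by
  refine lt_translationNumber_of_forall_add_lt _ (continuous_units _) fun x => ?_
  rw [show (l.prod : CircleDeg1Lift) = (l.map (↑)).prod from map_list_prod (Units.coeHom _) l]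
  simpa using add_length_mul_lt_list_prod_apply (l.map (↑)) (by simpa using hne)
    (by simpa using fun f hf => lt_map_of_int_lt_translationNumber _ (hl f hf)) x

end CircleDeg1Lift

/-- If each `fᵢ` is a commutator in `Homeo_Z^+(ℝ)` and the translation number of
`f₁ ∘ ⋯ ∘ f_g` is at most `-g`, then some `fᵢ` has translation number exactly `-1`. -/
theorem exists_rot_neg_one (g : ℕ) (hg : 1 ≤ g) (f a b : Fin g → CircleDeg1Liftˣ)
    (hcomm : ∀ i, f i = (b i)⁻¹ * (a i)⁻¹ * (b i) * (a i))
    (h : CircleDeg1Lift.translationNumber (((List.ofFn f).prod : CircleDeg1Liftˣ) : CircleDeg1Lift)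
        ≤ -(g : ℝ)) :
    ∃ i, CircleDeg1Lift.translationNumber ((f i : CircleDeg1Liftˣ) : CircleDeg1Lift) = -1 := by
  by_contra! hne
  have hgt : ∀ u ∈ List.ofFn f, ((-1 : ℤ) : ℝ) < τ u := by
    rw [List.forall_mem_ofFn_iff]
    intro i
    have hge := hcomm i ▸ neg_one_le_translationNumber_commutator (a i) (b i)
    exact_mod_cast hge.lt_of_ne' (hne i)
  have hprod := length_mul_lt_translationNumber_list_prod _
    (by simpa using Nat.one_le_iff_ne_zero.mp hg) hgt
  simp only [List.length_ofFn] at hprod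
  push_cast at hprod
  linarith
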